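/- Let D be the presented group on two generators a, t with the single relator t·a⁻¹·a⁻¹·t·a·t⁻¹·a⁻¹·t⁻¹·a, and let E be the presented group on two generators a, c with the single relator a⁻¹·c·a·c⁻¹·a⁻¹·a⁻¹·c⁻¹·a·c. Then D and E are isomorphic as groups. -/

import Mathlib

/-- Relator for the two-generator presentation on `a = of 0`, `t = of 1`:
`t·a⁻¹·a⁻¹·t·a·t⁻¹·a⁻¹·t⁻¹·a`. -/
def relD : FreeGroup (Fin 2) :=
  let a := FreeGroup.of 0
  let t := FreeGroup.of 1
  t * a⁻¹ * a⁻¹ * t * a * t⁻¹ * a⁻¹ * t⁻¹ * a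

/-- Relator for Kawauchi's presentation of the figure-eight knot group on
generators `a = of 0`, `c = of 1`: `a⁻¹·c·a·c⁻¹·a⁻¹·a⁻¹·c⁻¹·a·c`. -/
def relE : FreeGroup (Fin 2) :=
  let a := FreeGroup.of 0
  let c := FreeGroup.of 1
  a⁻¹ * c * a * c⁻¹ * a⁻¹ * a⁻¹ * c⁻¹ * a * c

/-!
Tietze transformation: the automorphism of the free group fixing `a` and substituting
`t = a c⁻¹ a⁻¹` (inverse `c = a⁻¹ t⁻¹ a`) sends the relator of `D` to
`(c⁻¹ a) · relE · (c⁻¹ a)⁻¹`.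
Conjugate relators have the same normal closure, so the two quotients agree.
-/

namespace Subgroup

variable {G : Type*} [Group G] {x y : G}

theorem mem_normalClosure_singleton_of_isConj (h : IsConj x y) : y ∈ normalClosure {x} := by
  obtain ⟨c, rfl⟩ := isConj_iff.1 h
  exact normalClosure_normal.conj_mem x (subset_normalClosure (Set.mem_singleton x)) c

theorem normalClosure_singleton_eq_of_isConj (h : IsConj x y) :
    normalClosure {x} = normalClosure {y} :=
  le_antisymm
    (normalClosure_le_normal <| Set.singleton_subset_iff.2 <|
      mem_normalClosure_singleton_of_isConj h.symm)
    (normalClosure_le_normal <| Set.singleton_subset_iff.2 <|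
      mem_normalClosure_singleton_of_isConj h)

end Subgroup

def PresentedGroup.equivOfIsConj {α β : Type*} (e : FreeGroup α ≃* FreeGroup β)
    {r : FreeGroup α} {s : FreeGroup β} (h : IsConj (e r) s) :
    PresentedGroup {r} ≃* PresentedGroup {s} :=
  QuotientGroup.congr _ _ e <| by
    rw [Subgroup.map_normalClosure _ _ e.surjective, Set.image_singleton, MonoidHom.coe_coe,
      Subgroup.normalClosure_singleton_eq_of_isConj h]

open FreeGroup

def tietzeSubstitution : FreeGroup (Fin 2) ≃* FreeGroup (Fin 2) :=
  MonoidHom.toMulEquiv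
    (lift ![of 0, of 0 * (of 1)⁻¹ * (of 0)⁻¹])
    (lift ![of 0, (of 0)⁻¹ * (of 1)⁻¹ * of 0])
    (by ext i; fin_cases i <;> simp)
    (by ext i; fin_cases i <;> simp)

theorem isConj_tietzeSubstitution_relD : IsConj (tietzeSubstitution relD) relE :=
  isConj_iff.2 ⟨(of 0)⁻¹ * of 1, by
    simp only [tietzeSubstitution, relD, relE, MonoidHom.toMulEquiv_apply, _root_.map_mul,
      _root_.map_inv, lift_apply_of, Matrix.cons_val_zero, Matrix.cons_val_one,
      Matrix.cons_val_fin_one]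
    group⟩

theorem stmt_4 :
    Nonempty (PresentedGroup ({relD} : Set (FreeGroup (Fin 2))) ≃*
      PresentedGroup ({relE} : Set (FreeGroup (Fin 2)))) :=
  ⟨PresentedGroup.equivOfIsConj tietzeSubstitution isConj_tietzeSubstitution_relD⟩
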